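/- ∑_{n=2}^∞ arctanh(1/n²) = (1/2)·ln(sinh(π)/π). -/

import Mathlib

/-!
Since `arctanh x = ½ log ((1 + x) / (1 - x))`, the `N`-th partial sum is `½ log (P_N / Q_N)` with
`P_N = ∏ (1 + 1/n²)` and `Q_N = ∏ (1 - 1/n²)` over `2 ≤ n ≤ N + 1`. Euler's sine product at `z = i`
gives `∏_{n ≥ 1} (1 + 1/n²) = sinh π / π`, so `P_N → sinh π / (2π)` after removing the factor `2`
at `n = 1`, while `Q_N` telescopes to `(N + 2) / (2 (N + 1)) → 1/2`.
-/

noncomputable def arctanh (x : ℝ) : ℝ := (1/2) * Real.log ((1 + x) / (1 - x))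

open Real Filter Finset Topology

lemma arctanh_nonneg {x : ℝ} (h0 : 0 ≤ x) (h1 : x < 1) : 0 ≤ arctanh x := by
  have hlog : 0 ≤ Real.log ((1 + x) / (1 - x)) :=
    Real.log_nonneg (by rw [le_div_iff₀ (by linarith)]; linarith)
  unfold arctanh
  positivity

lemma sum_arctanh_eq {ι : Type*} (s : Finset ι) (f : ι → ℝ) (hf : ∀ i ∈ s, f i ∈ Set.Ioo (-1) 1) :
    ∑ i ∈ s, arctanh (f i) = 1/2 * Real.log ((∏ i ∈ s, (1 + f i)) / ∏ i ∈ s, (1 - f i)) := by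
  rw [← prod_div_distrib, Real.log_prod, mul_sum]
  · rfl
  intro i hi
  obtain ⟨hl, hr⟩ := hf i hi
  exact div_ne_zero (by linarith) (by linarith)

lemma tendsto_prod_one_add_sq_div_sq {x : ℝ} (hx : x ≠ 0) :
    Tendsto (fun n : ℕ => ∏ j ∈ range n, (1 + x ^ 2 / ((j : ℝ) + 1) ^ 2)) atTop
      (𝓝 (sinh (π * x) / (π * x))) := by
  have h := tendsto_euler_sin_prod' (x := x * Complex.I) (by simpa using hx)
  rw [← mul_assoc, Complex.sin_mul_I, mul_div_mul_right _ _ Complex.I_ne_zero] at h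
  rw [← tendsto_ofReal_iff]
  push_cast
  convert h using 3 with n j
  simp only [sineTerm, mul_pow, Complex.I_sq]
  ring

lemma tendsto_prod_one_add_inv_sq_add_two :
    Tendsto (fun N : ℕ => ∏ n ∈ range N, (1 + (((n : ℝ) + 2) ^ 2)⁻¹)) atTop
      (𝓝 (sinh π / π / 2)) := by
  have h := (tendsto_prod_one_add_sq_div_sq one_ne_zero).comp (tendsto_add_atTop_nat 1)
  simp only [mul_one, Function.comp_def, prod_range_succ'] at h
  convert h.div_const 2 using 2 with N
  norm_num [add_assoc]

lemma prod_range_one_sub_inv_sq_add_two (N : ℕ) :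
    ∏ n ∈ range N, (1 - (((n : ℝ) + 2) ^ 2)⁻¹) = ((N : ℝ) + 2) / (2 * ((N : ℝ) + 1)) := by
  induction N with
  | zero => norm_num
  | succ N ih =>
    -- the new factor is `(N + 1) (N + 3) / (N + 2)²`
    rw [prod_range_succ, ih]
    push_cast
    field_simp
    ring

lemma tendsto_prod_one_sub_inv_sq_add_two :
    Tendsto (fun N : ℕ => ∏ n ∈ range N, (1 - (((n : ℝ) + 2) ^ 2)⁻¹)) atTop (𝓝 (1/2)) := by
  have h := (tendsto_one_div_add_atTop_nhds_zero_nat.const_add 1).div_const (2 : ℝ)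
  rw [add_zero] at h
  refine h.congr fun N => ?_
  rw [prod_range_one_sub_inv_sq_add_two]
  field_simp
  ring

theorem sum_arctanh_inv_sq :
    ∑' n : ℕ, arctanh ((((n : ℝ) + 2) ^ 2)⁻¹) =
      (1/2) * Real.log (Real.sinh Real.pi / Real.pi) := by
  have hbounds (n : ℕ) : 0 < (((n : ℝ) + 2) ^ 2)⁻¹ ∧ (((n : ℝ) + 2) ^ 2)⁻¹ < 1 :=
    ⟨by positivity, inv_lt_one_of_one_lt₀ (by nlinarith [n.cast_nonneg (α := ℝ)])⟩
  have hratio := tendsto_prod_one_add_inv_sq_add_two.div tendsto_prod_one_sub_inv_sq_add_two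
    (by norm_num)
  rw [show sinh π / π / 2 / (1/2) = sinh π / π by ring] at hratio
  have hpos : 0 < sinh π / π := div_pos (sinh_pos_iff.2 pi_pos) pi_pos
  refine HasSum.tsum_eq ((hasSum_iff_tendsto_nat_of_nonneg
    (fun n => arctanh_nonneg (hbounds n).1.le (hbounds n).2) _).2 ?_)
  simp_rw [sum_arctanh_eq _ _ fun n _ => ⟨by linarith [(hbounds n).1], (hbounds n).2⟩]
  exact ((continuousAt_log hpos.ne').tendsto.comp hratio).const_mul _
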